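/- arXiv:2104.14172 — 2 statements merged into one kernel-verified Lean document; each statement's English description precedes it below -/
import Mathlib

section
/- For any two finite simple graphs G1 and G2 on disjoint vertex sets, the average number of colors in the non-equivalent colorings of the join satisfies A(G1 + G2) = A(G1) + A(G2). -/
/-!
In the join every vertex of `G1` is adjacent to every vertex of `G2`, so each colour class of a
colouring of `G1 + G2` lies inside one of the two sides. Colourings of the join therefore
correspond bijectively to pairs of colourings of `G1` and `G2`, and the numbers of colours add.
Hence `B(G1 + G2) = B(G1) B(G2)` and `T(G1 + G2) = T(G1) B(G2) + B(G1) T(G2)`; dividing the second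
identity by the first gives `A(G1 + G2) = A(G1) + A(G2)`, since `B` is positive (the partition
into singletons is a colouring).
-/

open Finset

/-- A partition of the vertex set of `G` into independent (stable) sets. -/
def IsStablePartition {V : Type*} [Fintype V] [DecidableEq V] (G : SimpleGraph V)
    (P : Finpartition (Finset.univ : Finset V)) : Prop :=
  ∀ p ∈ P.parts, ∀ u ∈ p, ∀ v ∈ p, ¬ G.Adj u v

/-- `colS G k` : number of non-equivalent colorings of `G` with exactly `k` colors. -/
noncomputable def colS {V : Type*} [Fintype V] [DecidableEq V] (G : SimpleGraph V) (k : ℕ) : ℕ :=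
  Set.ncard {P : Finpartition (Finset.univ : Finset V) |
    IsStablePartition G P ∧ P.parts.card = k}

/-- `colB G` : total number of non-equivalent colorings of `G`. -/
noncomputable def colB {V : Type*} [Fintype V] [DecidableEq V] (G : SimpleGraph V) : ℕ :=
  ∑ k ∈ Finset.range (Fintype.card V + 1), colS G k

/-- `colT G` : total number of color classes over all non-equivalent colorings of `G`. -/
noncomputable def colT {V : Type*} [Fintype V] [DecidableEq V] (G : SimpleGraph V) : ℕ :=
  ∑ k ∈ Finset.range (Fintype.card V + 1), k * colS G k

/-- `colA G` : average number of colors in the non-equivalent colorings of `G`. -/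
noncomputable def colA {V : Type*} [Fintype V] [DecidableEq V] (G : SimpleGraph V) : ℚ :=
  (colT G : ℚ) / (colB G : ℚ)

/-- Disjoint union of two graphs. -/
def graphUnion {V W : Type*} (G : SimpleGraph V) (H : SimpleGraph W) : SimpleGraph (V ⊕ W) where
  Adj a b := match a, b with
    | Sum.inl x, Sum.inl y => G.Adj x y
    | Sum.inr x, Sum.inr y => H.Adj x y
    | _, _ => False
  symm := by constructor; rintro (x|x) (y|y) h <;> first | exact h.symm | exact h.elim
  loopless := by constructor; rintro (x|x) h <;> first | exact G.loopless.irrefl x h | exact H.loopless.irrefl x h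

/-- Join of two graphs: disjoint union plus all cross edges. -/
def graphJoin {V W : Type*} (G : SimpleGraph V) (H : SimpleGraph W) : SimpleGraph (V ⊕ W) where
  Adj a b := match a, b with
    | Sum.inl x, Sum.inl y => G.Adj x y
    | Sum.inr x, Sum.inr y => H.Adj x y
    | _, _ => True
  symm := by constructor; rintro (x|x) (y|y) h <;> first | exact h.symm | trivial
  loopless := by constructor; rintro (x|x) h <;> first | exact G.loopless.irrefl x h | exact H.loopless.irrefl x h

/-- Deletion of a vertex. -/
def deleteVertex {V : Type*} (G : SimpleGraph V) (v : V) : SimpleGraph {x : V // x ≠ v} :=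
  G.induce {x : V | x ≠ v}

namespace Finpartition

variable {α β : Type*} [DecidableEq α] [DecidableEq β] {s : Finset α} {t : Finset β}
  {u : Finset (α ⊕ β)}

def disjSum (P : Finpartition s) (Q : Finpartition t) : Finpartition (s.disjSum t) :=
  ofExistsUnique (P.parts.image (·.disjSum ∅) ∪ Q.parts.image (Finset.disjSum ∅))
    (by
      simp only [mem_union, mem_image]
      rintro _ (⟨p, hp, rfl⟩ | ⟨q, hq, rfl⟩)
      · exact disjSum_mono (P.le hp) (empty_subset _)
      · exact disjSum_mono (empty_subset _) (Q.le hq))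
    (by
      rintro (a | b) hx
      · refine ⟨(P.part a).disjSum ∅, ?_, ?_⟩
        · simp_all
        · simp only [mem_union, mem_image]
          rintro _ ⟨⟨p, hp, rfl⟩ | ⟨q, hq, rfl⟩, hmem⟩
          · simp_all [P.part_eq_of_mem hp]
          · simp at hmem
      · refine ⟨(∅ : Finset α).disjSum (Q.part b), ?_, ?_⟩
        · simp_all
        · simp only [mem_union, mem_image]
          rintro _ ⟨⟨p, hp, rfl⟩ | ⟨q, hq, rfl⟩, hmem⟩
          · simp at hmem
          · simp_all [Q.part_eq_of_mem hq])
    (by simp)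

lemma card_parts_disjSum (P : Finpartition s) (Q : Finpartition t) :
    #(P.disjSum Q).parts = #P.parts + #Q.parts := by
  rw [disjSum, ofExistsUnique_parts, card_union_of_disjoint,
    card_image_of_injective _ fun p p' h => (disjSum_inj.1 h).1,
    card_image_of_injective _ fun q q' h => (disjSum_inj.1 h).2]
  simp only [disjoint_left, mem_image, not_exists, not_and]
  rintro _ ⟨p, hp, rfl⟩ q - h
  exact P.ne_empty hp (disjSum_inj.1 h).1.symm

def toLeft (P : Finpartition u) : Finpartition u.toLeft :=
  ofErase (P.parts.image Finset.toLeft)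
    (SupIndep.image <| supIndep_iff_pairwiseDisjoint.2 fun p hp q hq hpq =>
      disjoint_left.2 fun _ ha hb =>
        disjoint_left.1 (P.disjoint hp hq hpq) (mem_toLeft.1 ha) (mem_toLeft.1 hb))
    (by
      ext a
      simp only [sup_image, mem_sup, Function.comp_apply, id, mem_toLeft]
      exact ⟨fun ⟨p, hp, ha⟩ => P.le hp ha, fun ha => P.exists_mem ha⟩)

def toRight (P : Finpartition u) : Finpartition u.toRight :=
  ofErase (P.parts.image Finset.toRight)
    (SupIndep.image <| supIndep_iff_pairwiseDisjoint.2 fun p hp q hq hpq =>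
      disjoint_left.2 fun _ ha hb =>
        disjoint_left.1 (P.disjoint hp hq hpq) (mem_toRight.1 ha) (mem_toRight.1 hb))
    (by
      ext a
      simp only [sup_image, mem_sup, Function.comp_apply, id, mem_toRight]
      exact ⟨fun ⟨p, hp, ha⟩ => P.le hp ha, fun ha => P.exists_mem ha⟩)

lemma parts_toLeft_disjSum (P : Finpartition s) (Q : Finpartition t) :
    (P.disjSum Q).toLeft.parts = P.parts := by
  ext p
  simp only [toLeft, disjSum, ofErase_parts, ofExistsUnique_parts, image_union, image_image,
    Function.comp_def, toLeft_disjSum, mem_erase, mem_union, mem_image, bot_eq_empty,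
    exists_eq_right]
  exact ⟨fun ⟨hp, h⟩ => h.resolve_right fun ⟨_, _, h⟩ => hp h.symm,
    fun h => ⟨P.ne_empty h, .inl h⟩⟩

lemma parts_toRight_disjSum (P : Finpartition s) (Q : Finpartition t) :
    (P.disjSum Q).toRight.parts = Q.parts := by
  ext q
  simp only [toRight, disjSum, ofErase_parts, ofExistsUnique_parts, image_union, image_image,
    Function.comp_def, toRight_disjSum, mem_erase, mem_union, mem_image, bot_eq_empty,
    exists_eq_right]
  exact ⟨fun ⟨hq, h⟩ => h.resolve_left fun ⟨_, _, h⟩ => hq h.symm,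
    fun h => ⟨Q.ne_empty h, .inr h⟩⟩

lemma parts_toLeft_disjSum_toRight (P : Finpartition u)
    (h : ∀ p ∈ P.parts, p.toLeft = ∅ ∨ p.toRight = ∅) :
    (P.toLeft.disjSum P.toRight).parts = P.parts := by
  ext q
  simp only [toLeft, toRight, disjSum, ofErase_parts, ofExistsUnique_parts, mem_union, mem_image,
    mem_erase, bot_eq_empty]
  constructor
  · rintro (⟨_, ⟨hne, p, hp, rfl⟩, rfl⟩ | ⟨_, ⟨hne, p, hp, rfl⟩, rfl⟩)
    · rwa [disjSum_eq_iff.2 ⟨rfl, ((h p hp).resolve_left hne).symm⟩]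
    · rwa [disjSum_eq_iff.2 ⟨((h p hp).resolve_right hne).symm, rfl⟩]
  · intro hq
    have hne : ¬(q.toLeft = ∅ ∧ q.toRight = ∅) := fun ⟨hl, hr⟩ =>
      P.ne_empty hq (by simpa using (disjSum_eq_iff.2 ⟨hl.symm, hr.symm⟩).symm)
    rcases h q hq with hl | hr
    · exact .inr
        ⟨_, ⟨fun hr => hne ⟨hl, hr⟩, q, hq, rfl⟩, disjSum_eq_iff.2 ⟨hl.symm, rfl⟩⟩
    · exact .inl
        ⟨_, ⟨fun hl => hne ⟨hl, hr⟩, q, hq, rfl⟩, disjSum_eq_iff.2 ⟨rfl, hr.symm⟩⟩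

end Finpartition

section Count

variable {V : Type*} [Fintype V] [DecidableEq V]

open Classical in
noncomputable def stablePartitions (G : SimpleGraph V) : Finset (Finpartition (univ : Finset V)) :=
  {P | IsStablePartition G P}

@[simp] lemma mem_stablePartitions {G : SimpleGraph V} {P : Finpartition (univ : Finset V)} :
    P ∈ stablePartitions G ↔ IsStablePartition G P := by
  simp [stablePartitions]

lemma sum_range_mul_colS (G : SimpleGraph V) (f : ℕ → ℕ) :
    ∑ k ∈ range (Fintype.card V + 1), f k * colS G k =
      ∑ P ∈ stablePartitions G, f #P.parts := by
  classical
  rw [← sum_fiberwise_of_maps_to (s := stablePartitions G) (g := fun P => #P.parts) fun P _ =>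
    mem_range_succ_iff.2 (P.card_parts_le_card.trans_eq card_univ)]
  refine sum_congr rfl fun k _ => ?_
  have hcolS : colS G k = #{P ∈ stablePartitions G | #P.parts = k} := by
    rw [colS, ← Set.ncard_coe_finset]
    congr 1
    ext P
    simp
  rw [hcolS, sum_const_nat fun P hP => congrArg f (mem_filter.1 hP).2, mul_comm]

lemma colB_eq_card (G : SimpleGraph V) : colB G = #(stablePartitions G) := by
  simpa [colB] using sum_range_mul_colS G 1

lemma colT_eq_sum (G : SimpleGraph V) : colT G = ∑ P ∈ stablePartitions G, #P.parts :=
  sum_range_mul_colS G id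

lemma bot_mem_stablePartitions (G : SimpleGraph V) : ⊥ ∈ stablePartitions G := by
  rw [mem_stablePartitions]
  intro p hp u hu v hv
  obtain ⟨a, -, rfl⟩ := Finpartition.mem_bot_iff.1 hp
  rw [mem_singleton] at hu hv
  subst hu hv
  exact G.loopless.irrefl _

lemma colB_pos (G : SimpleGraph V) : 0 < colB G :=
  colB_eq_card G ▸ card_pos.2 ⟨⊥, bot_mem_stablePartitions G⟩

end Count

section Join

variable {V W : Type*} {G1 : SimpleGraph V} {G2 : SimpleGraph W}

@[simp] lemma graphJoin_adj_inl_inl {x y : V} :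
    (graphJoin G1 G2).Adj (.inl x) (.inl y) ↔ G1.Adj x y :=
  Iff.rfl

@[simp] lemma graphJoin_adj_inr_inr {x y : W} :
    (graphJoin G1 G2).Adj (.inr x) (.inr y) ↔ G2.Adj x y :=
  Iff.rfl

lemma graphJoin_adj_inl_inr (x : V) (y : W) : (graphJoin G1 G2).Adj (.inl x) (.inr y) :=
  trivial

variable [Fintype V] [DecidableEq V] [Fintype W] [DecidableEq W]

-- `P.disjSum Q` is a partition of `univ.disjSum univ`, which is `univ` by definition.
lemma isStablePartition_graphJoin_disjSum_iff (P : Finpartition (univ : Finset V))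
    (Q : Finpartition (univ : Finset W)) :
    IsStablePartition (graphJoin G1 G2) (P.disjSum Q) ↔
      IsStablePartition G1 P ∧ IsStablePartition G2 Q := by
  simp [IsStablePartition, Finpartition.disjSum, or_imp, forall_and]

lemma IsStablePartition.toLeft_eq_empty_or_toRight_eq_empty
    {P : Finpartition (univ : Finset (V ⊕ W))} (hP : IsStablePartition (graphJoin G1 G2) P) :
    ∀ p ∈ P.parts, p.toLeft = ∅ ∨ p.toRight = ∅ := by
  intro p hp
  by_contra! ⟨⟨x, hx⟩, ⟨y, hy⟩⟩
  exact hP p hp _ (mem_toLeft.1 hx) _ (mem_toRight.1 hy) (graphJoin_adj_inl_inr x y)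

lemma IsStablePartition.toLeft {P : Finpartition (univ : Finset (V ⊕ W))}
    (hP : IsStablePartition (graphJoin G1 G2) P) :
    IsStablePartition G1 (P.toLeft.copy toLeft_univ) := by
  simp only [IsStablePartition, Finpartition.copy_parts, Finpartition.toLeft,
    Finpartition.ofErase_parts, mem_erase, mem_image]
  rintro _ ⟨-, p, hp, rfl⟩ x hx y hy
  exact hP p hp _ (mem_toLeft.1 hx) _ (mem_toLeft.1 hy)

lemma IsStablePartition.toRight {P : Finpartition (univ : Finset (V ⊕ W))}
    (hP : IsStablePartition (graphJoin G1 G2) P) :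
    IsStablePartition G2 (P.toRight.copy toRight_univ) := by
  simp only [IsStablePartition, Finpartition.copy_parts, Finpartition.toRight,
    Finpartition.ofErase_parts, mem_erase, mem_image]
  rintro _ ⟨-, p, hp, rfl⟩ x hx y hy
  exact hP p hp _ (mem_toRight.1 hx) _ (mem_toRight.1 hy)

end Join

section JoinCount

variable {V W : Type*} [Fintype V] [DecidableEq V] [Fintype W] [DecidableEq W]
  (G1 : SimpleGraph V) (G2 : SimpleGraph W)

lemma sum_stablePartitions_graphJoin {M : Type*} [AddCommMonoid M]
    (f : Finpartition (univ : Finset (V ⊕ W)) → M) :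
    ∑ P ∈ stablePartitions (graphJoin G1 G2), f P =
      ∑ PQ ∈ stablePartitions G1 ×ˢ stablePartitions G2, f (PQ.1.disjSum PQ.2) := by
  have disjSum_toLeft_toRight {P : Finpartition (univ : Finset (V ⊕ W))}
      (hP : IsStablePartition (graphJoin G1 G2) P) :
      (P.toLeft.copy toLeft_univ).disjSum (P.toRight.copy toRight_univ) = P :=
    Finpartition.ext <| P.parts_toLeft_disjSum_toRight hP.toLeft_eq_empty_or_toRight_eq_empty
  refine sum_nbij' (fun P => (P.toLeft.copy toLeft_univ, P.toRight.copy toRight_univ))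
    (fun PQ => PQ.1.disjSum PQ.2) ?_ ?_ ?_ ?_ ?_
  · intro P hP
    rw [mem_stablePartitions] at hP
    exact mem_product.2 ⟨mem_stablePartitions.2 hP.toLeft, mem_stablePartitions.2 hP.toRight⟩
  · intro PQ hPQ
    rw [mem_product, mem_stablePartitions, mem_stablePartitions] at hPQ
    exact mem_stablePartitions.2 ((isStablePartition_graphJoin_disjSum_iff _ _).2 hPQ)
  · intro P hP
    exact disjSum_toLeft_toRight (mem_stablePartitions.1 hP)
  · intro PQ _
    exact Prod.ext (Finpartition.ext (PQ.1.parts_toLeft_disjSum PQ.2))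
      (Finpartition.ext (PQ.1.parts_toRight_disjSum PQ.2))
  · intro P hP
    rw [disjSum_toLeft_toRight (mem_stablePartitions.1 hP)]

lemma colB_graphJoin : colB (graphJoin G1 G2) = colB G1 * colB G2 := by
  rw [colB_eq_card, colB_eq_card, colB_eq_card, card_eq_sum_ones,
    sum_stablePartitions_graphJoin, ← card_eq_sum_ones, card_product]

lemma colT_graphJoin : colT (graphJoin G1 G2) = colT G1 * colB G2 + colB G1 * colT G2 := by
  simp only [colT_eq_sum, colB_eq_card, sum_stablePartitions_graphJoin,
    Finpartition.card_parts_disjSum, sum_product, sum_add_distrib, sum_const, smul_eq_mul, sum_mul,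
    mul_sum]
  exact congrArg (· + _) (sum_congr rfl fun _ _ => mul_comm _ _)

end JoinCount

theorem stmt1 {V W : Type*} [Fintype V] [DecidableEq V] [Fintype W] [DecidableEq W]
    (G1 : SimpleGraph V) (G2 : SimpleGraph W) :
    colA (graphJoin G1 G2) = colA G1 + colA G2 := by
  have hB1 : (colB G1 : ℚ) ≠ 0 := mod_cast (colB_pos G1).ne'
  have hB2 : (colB G2 : ℚ) ≠ 0 := mod_cast (colB_pos G2).ne'
  rw [colA, colA, colA, colB_graphJoin, colT_graphJoin]
  push_cast
  field_simp
end

section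
/- For the complement of the path on n ≥ 1 vertices, A(complement of P_n) = ((n+1)·F_{n+2} + (2n−1)·F_{n+1}) / (5·F_{n+1}), where F_m is the mth Fibonacci number (F_1 = F_2 = 1). -/
open Finset

/-!
A block of a stable partition of the complement of `P_n` is a clique of `P_n`: a singleton or an
edge `{i, i + 1}`. So stable partitions correspond to matchings `M` of `P_n`, the partition having
`n - |M|` blocks. Splitting the matchings of a path with `m` edges according to whether the last
edge is used gives the Fibonacci recursion for their number, and
`T (m + 2) = T (m + 1) + T m + F (m + 4)` for their total block count `T m`, which the closed form
solves.
-/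

def NoTwoConsecutive (M : Finset ℕ) : Prop := ∀ i ∈ M, i + 1 ∉ M

instance : DecidablePred NoTwoConsecutive := fun M =>
  inferInstanceAs (Decidable (∀ i ∈ M, i + 1 ∉ M))

/-- Matchings of the path `0 - 1 - ⋯ - m`, each encoded by the left endpoints of its edges. -/
def pathMatchings (m : ℕ) : Finset (Finset ℕ) :=
  (range m).powerset.filter NoTwoConsecutive

section PathMatchings

variable {m : ℕ} {M : Finset ℕ}

lemma mem_pathMatchings : M ∈ pathMatchings m ↔ M ⊆ range m ∧ NoTwoConsecutive M := by
  simp [pathMatchings]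

lemma lt_of_mem_pathMatchings (hM : M ∈ pathMatchings m) {i : ℕ} (hi : i ∈ M) : i < m :=
  mem_range.1 (mem_pathMatchings.1 hM |>.1 hi)

lemma card_le_of_mem_pathMatchings (hM : M ∈ pathMatchings m) : #M ≤ m := by
  simpa using card_le_card (mem_pathMatchings.1 hM).1

lemma pathMatchings_zero : pathMatchings 0 = {∅} := by decide

lemma pathMatchings_one : pathMatchings 1 = {∅, {0}} := by decide

lemma pathMatchings_add_two (m : ℕ) :
    pathMatchings (m + 2) = pathMatchings (m + 1) ∪ (pathMatchings m).image (insert (m + 1)) := by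
  ext M
  simp only [mem_union, mem_image, mem_pathMatchings, NoTwoConsecutive, subset_iff, mem_range]
  constructor
  · rintro ⟨hM, hM'⟩
    by_cases h : m + 1 ∈ M
    · refine .inr ⟨M.erase (m + 1), ⟨fun i hi => ?_, fun i hi hi' => ?_⟩, insert_erase h⟩
      · rw [mem_erase] at hi
        have : i ≠ m := fun him => hM' i hi.2 (him ▸ h)
        have := hM hi.2
        omega
      · exact hM' i (mem_of_mem_erase hi) (mem_of_mem_erase hi')
    · refine .inl ⟨fun i hi => ?_, hM'⟩
      have : i ≠ m + 1 := fun him => h (him ▸ hi)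
      have := hM hi
      omega
  · rintro (⟨hM, hM'⟩ | ⟨M, ⟨hM, hM'⟩, rfl⟩)
    · exact ⟨fun i hi => by have := hM hi; omega, hM'⟩
    · simp only [mem_insert]
      refine ⟨fun i hi => ?_, fun i hi hi' => ?_⟩
      · rcases hi with rfl | hi
        · omega
        · have := hM hi; omega
      · rcases hi with rfl | hi <;> rcases hi' with hi' | hi'
        · omega
        · have := hM hi'; omega
        · have := hM hi; omega
        · exact hM' i hi hi'

lemma sum_pathMatchings_add_two {β : Type*} [AddCommMonoid β] (m : ℕ) (f : Finset ℕ → β) :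
    ∑ M ∈ pathMatchings (m + 2), f M =
      ∑ M ∈ pathMatchings (m + 1), f M + ∑ M ∈ pathMatchings m, f (insert (m + 1) M) := by
  have last_notMem {k : ℕ} {M : Finset ℕ} (hM : M ∈ pathMatchings k) (hk : k ≤ m + 1) :
      m + 1 ∉ M := fun h => by have := lt_of_mem_pathMatchings hM h; omega
  rw [pathMatchings_add_two, sum_union, sum_image]
  · intro M hM M' hM' h
    simpa [erase_insert (last_notMem hM (by omega)), erase_insert (last_notMem hM' (by omega))]
      using congrArg (erase · (m + 1)) h
  · rw [disjoint_right]
    rintro _ hM' hM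
    obtain ⟨M', -, rfl⟩ := mem_image.1 hM'
    exact last_notMem hM le_rfl (mem_insert_self _ _)

lemma card_pathMatchings (m : ℕ) : #(pathMatchings m) = Nat.fib (m + 2) := by
  induction m using Nat.twoStepInduction with
  | zero => rw [pathMatchings_zero]; rfl
  | one => rw [pathMatchings_one]; rfl
  | more m ih₀ ih₁ =>
    rw [card_eq_sum_ones] at *
    rw [sum_pathMatchings_add_two, ih₀, ih₁, Nat.fib_add_two (n := m + 2), add_comm]

lemma five_mul_sum_sub_card_pathMatchings (m : ℕ) :
    5 * ∑ M ∈ pathMatchings m, (m + 1 - #M) =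
      (m + 2) * Nat.fib (m + 3) + (2 * m + 1) * Nat.fib (m + 2) := by
  induction m using Nat.twoStepInduction with
  | zero => rw [pathMatchings_zero]; rfl
  | one => rw [pathMatchings_one]; rfl
  | more m ih₀ ih₁ =>
    have h₁ : ∑ M ∈ pathMatchings (m + 1), (m + 2 + 1 - #M) =
        ∑ M ∈ pathMatchings (m + 1), (m + 1 + 1 - #M) + Nat.fib (m + 3) := by
      rw [← card_pathMatchings, card_eq_sum_ones, ← sum_add_distrib]
      refine sum_congr rfl fun M hM => ?_
      have := card_le_of_mem_pathMatchings hM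
      omega
    have h₀ : ∑ M ∈ pathMatchings m, (m + 2 + 1 - #(insert (m + 1) M)) =
        ∑ M ∈ pathMatchings m, (m + 1 - #M) + Nat.fib (m + 2) := by
      rw [← card_pathMatchings, card_eq_sum_ones, ← sum_add_distrib]
      refine sum_congr rfl fun M hM => ?_
      have hm : m + 1 ∉ M := fun h => by have := lt_of_mem_pathMatchings hM h; omega
      have := card_le_of_mem_pathMatchings hM
      rw [card_insert_of_notMem hm]
      omega
    rw [sum_pathMatchings_add_two, h₁, h₀]
    linear_combination ih₁ + ih₀ + (m + 4) * (Nat.fib_add_two (n := m + 3)).symm +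
      (2 * m + 6) * (Nat.fib_add_two (n := m + 2)).symm

end PathMatchings

instance {α β : Type*} [DecidableEq β] (f : α → β) : DecidableRel (Setoid.ker f) :=
  fun a b => inferInstanceAs (Decidable (f a = f b))

namespace Finpartition

variable {α : Type*} [DecidableEq α]

lemma mem_part_comm {s : Finset α} (P : Finpartition s) {a b : α} (ha : a ∈ s) (hb : b ∈ s) :
    a ∈ P.part b ↔ b ∈ P.part a := by
  rw [P.mem_part_iff_part_eq_part ha hb, P.mem_part_iff_part_eq_part hb ha, eq_comm]

lemma ext_part {s : Finset α} {P Q : Finpartition s}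
    (h : ∀ a b, b ∈ P.part a ↔ b ∈ Q.part a) : P = Q := by
  have part_eq a : P.part a = Q.part a := Finset.ext (h a)
  ext t
  constructor
  · intro ht
    obtain ⟨a, ha, rfl⟩ := P.part_surjOn ht
    exact part_eq a ▸ Q.part_mem.2 ha
  · intro ht
    obtain ⟨a, ha, rfl⟩ := Q.part_surjOn ht
    exact part_eq a ▸ P.part_mem.2 ha

lemma card_parts_ofSetoid_ker [Fintype α] {β : Type*} [DecidableEq β] (f : α → β) :
    #(ofSetoid (Setoid.ker f)).parts = #(univ.image f) := by
  have parts_eq : (ofSetoid (Setoid.ker f)).parts =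
      (univ.image f).image fun c => ({b | c = f b} : Finset α) := by
    simp only [ofSetoid, ofSetSetoid_parts, image_image]
    rfl
  rw [parts_eq, card_image_of_injOn]
  simp only [Set.InjOn, coe_image, coe_univ, Set.image_univ, Set.mem_range]
  rintro _ ⟨a, rfl⟩ _ ⟨b, rfl⟩ hab
  simpa using (Finset.ext_iff.1 hab b).2 (by simp)

end Finpartition

section StablePartitions

variable {V : Type*} [Fintype V] [DecidableEq V] (G : SimpleGraph V)

lemma isStablePartition_iff_part {P : Finpartition (univ : Finset V)} :
    IsStablePartition G P ↔ ∀ u v, v ∈ P.part u → ¬G.Adj u v := by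
  refine ⟨fun hP u v hv => hP _ (P.part_mem.2 (mem_univ u)) u (P.mem_part (mem_univ u)) v hv,
    fun hP p hp u hu v hv => hP u v ?_⟩
  rwa [P.part_eq_of_mem hp hu]

open scoped Classical in
lemma colS_eq_card (k : ℕ) :
    colS G k = #{P : Finpartition (univ : Finset V) | IsStablePartition G P ∧ #P.parts = k} := by
  rw [colS, ← Set.ncard_coe_finset, coe_filter]
  simp

open scoped Classical in
lemma colB_eq_card_s15 :
    colB G = #{P : Finpartition (univ : Finset V) | IsStablePartition G P} := by
  rw [colB, card_eq_sum_card_fiberwise (f := fun P => #P.parts) (t := range (Fintype.card V + 1))]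
  · simp only [colS_eq_card, filter_filter]
  · intro P _
    simpa [Nat.lt_succ_iff] using P.card_parts_le_card

open scoped Classical in
lemma colT_eq_sum_s15 :
    colT G = ∑ P : Finpartition (univ : Finset V) with IsStablePartition G P, #P.parts := by
  have hmaps : ∀ P ∈ ({P | IsStablePartition G P} : Finset (Finpartition (univ : Finset V))),
      #P.parts ∈ range (Fintype.card V + 1) := fun P _ => by
    simpa [Nat.lt_succ_iff] using P.card_parts_le_card
  rw [colT, ← sum_fiberwise_of_maps_to hmaps]
  refine sum_congr rfl fun k _ => ?_
  rw [colS_eq_card, filter_filter, sum_const_nat fun P hP => (mem_filter.1 hP).2.2, mul_comm]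

end StablePartitions

section ComplPathGraph

open SimpleGraph

variable {n : ℕ}

lemma not_compl_pathGraph_adj {u v : Fin n} :
    ¬(pathGraph n)ᶜ.Adj u v ↔ (u : ℕ) = v ∨ (u : ℕ) + 1 = v ∨ (v : ℕ) + 1 = u := by
  rw [compl_adj, pathGraph_adj, ne_eq, Fin.ext_iff]
  tauto

/-- The smallest vertex in the block of `v` of the partition with edges `{i, i + 1}`, `i ∈ M`. -/
def blockStart (M : Finset ℕ) (v : ℕ) : ℕ :=
  if v ≠ 0 ∧ v - 1 ∈ M then v - 1 else v

lemma blockStart_eq_or (M : Finset ℕ) (v : ℕ) : blockStart M v = v ∨ blockStart M v + 1 = v := by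
  unfold blockStart
  split_ifs <;> omega

lemma blockStart_eq_blockStart_succ_iff {M : Finset ℕ} (hM : NoTwoConsecutive M) (i : ℕ) :
    blockStart M i = blockStart M (i + 1) ↔ i ∈ M := by
  unfold blockStart
  by_cases hi : i ∈ M
  · have : ¬(i ≠ 0 ∧ i - 1 ∈ M) := fun h => hM _ h.2 (by rwa [Nat.sub_add_cancel (by omega)])
    simp [hi, this]
  · split_ifs <;> simp_all

def matchingPartition (n : ℕ) (M : Finset ℕ) : Finpartition (univ : Finset (Fin n)) :=
  Finpartition.ofSetoid (Setoid.ker fun v : Fin n => blockStart M v)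

lemma mem_part_matchingPartition {M : Finset ℕ} {u v : Fin n} :
    v ∈ (matchingPartition n M).part u ↔ blockStart M u = blockStart M v :=
  Finpartition.mem_part_ofSetoid_iff_rel

lemma isStablePartition_matchingPartition (M : Finset ℕ) :
    IsStablePartition (pathGraph n)ᶜ (matchingPartition n M) := by
  refine (isStablePartition_iff_part _).2 fun u v h => not_compl_pathGraph_adj.2 ?_
  rw [mem_part_matchingPartition] at h
  have := blockStart_eq_or M u
  have := blockStart_eq_or M v
  omega

lemma image_blockStart {M : Finset ℕ} (hM : NoTwoConsecutive M) :
    univ.image (fun v : Fin n => blockStart M v) = range n \ M.image (· + 1) := by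
  ext c
  simp only [mem_image, mem_univ, true_and, mem_sdiff, mem_range, not_exists, not_and]
  constructor
  · rintro ⟨v, rfl⟩
    unfold blockStart
    split_ifs with h
    · refine ⟨by omega, fun j hj hjc => hM j hj ?_⟩
      rw [hjc]
      exact h.2
    · exact ⟨v.2, fun j hj hjv => h ⟨by omega, by simpa [← hjv] using hj⟩⟩
  · rintro ⟨hc, hcM⟩
    refine ⟨⟨c, hc⟩, ?_⟩
    unfold blockStart
    rw [if_neg]
    rintro ⟨hc0, hc1⟩
    exact hcM _ hc1 (Nat.sub_add_cancel (by omega))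

lemma card_parts_matchingPartition {M : Finset ℕ} (hM : NoTwoConsecutive M)
    (hMn : M ⊆ range (n - 1)) : #(matchingPartition n M).parts = n - #M := by
  have hsub : M.image (· + 1) ⊆ range n := by
    intro c hc
    obtain ⟨i, hi, rfl⟩ := mem_image.1 hc
    have := mem_range.1 (hMn hi)
    exact mem_range.2 (by omega)
  rw [matchingPartition, Finpartition.card_parts_ofSetoid_ker, image_blockStart hM,
    card_sdiff_of_subset hsub, card_range, card_image_of_injective _ (add_left_injective 1)]

def pairedEdges (P : Finpartition (univ : Finset (Fin n))) : Finset ℕ :=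
  {i ∈ range (n - 1) | ∃ u v : Fin n, (u : ℕ) = i ∧ (v : ℕ) = i + 1 ∧ v ∈ P.part u}

lemma val_mem_pairedEdges_iff {P : Finpartition (univ : Finset (Fin n))} {u v : Fin n}
    (huv : (v : ℕ) = u + 1) : (u : ℕ) ∈ pairedEdges P ↔ v ∈ P.part u := by
  simp only [pairedEdges, mem_filter, mem_range]
  constructor
  · rintro ⟨-, u', v', hu', hv', h⟩
    rwa [Fin.ext hu', Fin.ext (hv'.trans huv.symm)] at h
  · intro h
    exact ⟨by omega, u, v, rfl, huv, h⟩

lemma mem_part_iff_pairedEdges {P : Finpartition (univ : Finset (Fin n))}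
    (hP : IsStablePartition (pathGraph n)ᶜ P) {u v : Fin n} :
    v ∈ P.part u ↔ (u : ℕ) = v ∨ ((v : ℕ) = u + 1 ∧ (u : ℕ) ∈ pairedEdges P) ∨
      ((u : ℕ) = v + 1 ∧ (v : ℕ) ∈ pairedEdges P) := by
  constructor
  · intro h
    rcases not_compl_pathGraph_adj.1 ((isStablePartition_iff_part _).1 hP u v h) with h' | h' | h'
    · exact .inl h'
    · exact .inr (.inl ⟨h'.symm, (val_mem_pairedEdges_iff h'.symm).2 h⟩)
    · refine .inr (.inr ⟨h'.symm, (val_mem_pairedEdges_iff h'.symm).2 ?_⟩)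
      exact (P.mem_part_comm (mem_univ u) (mem_univ v)).2 h
  · rintro (h | ⟨h, h'⟩ | ⟨h, h'⟩)
    · exact Fin.ext h ▸ P.mem_part (mem_univ u)
    · exact (val_mem_pairedEdges_iff h).1 h'
    · exact (P.mem_part_comm (mem_univ v) (mem_univ u)).2 ((val_mem_pairedEdges_iff h).1 h')

lemma eq_of_pairedEdges_eq {P Q : Finpartition (univ : Finset (Fin n))}
    (hP : IsStablePartition (pathGraph n)ᶜ P) (hQ : IsStablePartition (pathGraph n)ᶜ Q)
    (h : pairedEdges P = pairedEdges Q) : P = Q :=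
  Finpartition.ext_part fun u v => by
    rw [mem_part_iff_pairedEdges hP, mem_part_iff_pairedEdges hQ, h]

lemma noTwoConsecutive_pairedEdges {P : Finpartition (univ : Finset (Fin n))}
    (hP : IsStablePartition (pathGraph n)ᶜ P) : NoTwoConsecutive (pairedEdges P) := by
  intro i hi hi'
  have hn := mem_range.1 (mem_filter.1 hi').1
  let u : Fin n := ⟨i, by omega⟩
  let v : Fin n := ⟨i + 1, by omega⟩
  let w : Fin n := ⟨i + 2, by omega⟩
  have hv : v ∈ P.part u := (val_mem_pairedEdges_iff (u := u) rfl).1 hi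
  have hw : w ∈ P.part v := (val_mem_pairedEdges_iff (u := v) rfl).1 hi'
  rw [(P.mem_part_iff_part_eq_part (mem_univ v) (mem_univ u)).1 hv] at hw
  have := not_compl_pathGraph_adj.1 ((isStablePartition_iff_part _).1 hP u w hw)
  simp only [u, w] at this
  omega

lemma pairedEdges_matchingPartition {M : Finset ℕ} (hM : NoTwoConsecutive M)
    (hMn : M ⊆ range (n - 1)) : pairedEdges (matchingPartition n M) = M := by
  ext i
  constructor
  · intro hi
    obtain ⟨hi, u, v, rfl, huv, h⟩ := mem_filter.1 hi
    rwa [mem_part_matchingPartition, huv, blockStart_eq_blockStart_succ_iff hM] at h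
  · intro hi
    have := mem_range.1 (hMn hi)
    refine (val_mem_pairedEdges_iff (u := ⟨i, by omega⟩) (v := ⟨i + 1, by omega⟩) rfl).2 ?_
    rwa [mem_part_matchingPartition, blockStart_eq_blockStart_succ_iff hM]

lemma matchingPartition_pairedEdges {P : Finpartition (univ : Finset (Fin n))}
    (hP : IsStablePartition (pathGraph n)ᶜ P) : matchingPartition n (pairedEdges P) = P :=
  eq_of_pairedEdges_eq (isStablePartition_matchingPartition _) hP
    (pairedEdges_matchingPartition (noTwoConsecutive_pairedEdges hP) (filter_subset _ _))

open scoped Classical in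
lemma sum_stablePartitions_compl_pathGraph {β : Type*} [AddCommMonoid β] (f : ℕ → β) :
    ∑ P : Finpartition (univ : Finset (Fin n)) with IsStablePartition (pathGraph n)ᶜ P,
      f #P.parts = ∑ M ∈ pathMatchings (n - 1), f (n - #M) := by
  refine sum_nbij' pairedEdges (matchingPartition n) (fun P hP => ?_) (fun M hM => ?_)
    (fun P hP => matchingPartition_pairedEdges (mem_filter.1 hP).2) (fun M hM => ?_)
    (fun P hP => ?_)
  · exact mem_pathMatchings.2 ⟨filter_subset _ _, noTwoConsecutive_pairedEdges (mem_filter.1 hP).2⟩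
  · exact mem_filter.2 ⟨mem_univ _, isStablePartition_matchingPartition M⟩
  · obtain ⟨hMn, hM⟩ := mem_pathMatchings.1 hM
    exact pairedEdges_matchingPartition hM hMn
  · have hP := (mem_filter.1 hP).2
    conv_lhs => rw [← matchingPartition_pairedEdges hP]
    rw [card_parts_matchingPartition (noTwoConsecutive_pairedEdges hP) (filter_subset _ _)]

end ComplPathGraph

theorem stmt15 (n : ℕ) (hn : 1 ≤ n) :
    colA ((SimpleGraph.pathGraph n)ᶜ) =
      (((n + 1) * Nat.fib (n + 2) + (2 * n - 1) * Nat.fib (n + 1) : ℕ) : ℚ) /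
        ((5 * Nat.fib (n + 1) : ℕ) : ℚ) := by
  obtain ⟨m, rfl⟩ := Nat.exists_eq_add_of_le' hn
  have hB : colB (SimpleGraph.pathGraph (m + 1))ᶜ = Nat.fib (m + 2) := by
    rw [colB_eq_card_s15, card_eq_sum_ones, sum_stablePartitions_compl_pathGraph (fun _ => 1),
      ← card_eq_sum_ones, add_tsub_cancel_right, card_pathMatchings]
  have hT : 5 * colT (SimpleGraph.pathGraph (m + 1))ᶜ =
      (m + 1 + 1) * Nat.fib (m + 1 + 2) + (2 * (m + 1) - 1) * Nat.fib (m + 1 + 1) := by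
    rw [colT_eq_sum_s15, sum_stablePartitions_compl_pathGraph (fun k => k), add_tsub_cancel_right,
      show 2 * (m + 1) - 1 = 2 * m + 1 by omega]
    exact five_mul_sum_sub_card_pathMatchings m
  rw [colA, hB, ← hT, Nat.cast_mul, Nat.cast_mul, Nat.cast_ofNat,
    mul_div_mul_left _ _ (by norm_num : (5 : ℚ) ≠ 0)]
end
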